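/- arXiv:0802.0179 — 9 statements merged into one kernel-verified Lean document; each statement's English description precedes it below -/
import Mathlib

section
/- Let I(X,R) be an instance of the Index Coding problem with k messages, let q ≥ 2 and n ≥ 1, and let f : (Σ^n)^k → Σ^ℓ be an (n,q) index code of length ℓ for I(X,R). Then ℓ ≥ n·μ(I); equivalently, the transmission rate λ(n,q) = ℓ(n,q)/n of an optimal (n,q) index code satisfies λ(n,q) ≥ μ(I). -/
/-- `mu R` is the maximum, over side-information sets `H`, of the number of distinct
messages demanded by clients of `R` whose side-information set equals `H`. -/
def mu {ι : Type} [DecidableEq ι] (R : Finset (ι × Finset ι)) : ℕ :=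
  (R.image Prod.snd).sup fun H => ((R.filter fun r => r.2 = H).image Prod.fst).card

/-- `f` is an index code of block length `n` and length `ℓ` for the instance with
clients `R`: every client `(i, H) ∈ R` can decode message `i` from the broadcast
`f X` together with the messages indexed by `H`. -/
def IsIndexCode {ι A : Type} (R : Finset (ι × Finset ι)) (n ℓ : ℕ)
    (f : (ι → Fin n → A) → Fin ℓ → A) : Prop :=
  ∀ r ∈ R, ∀ X X' : ι → Fin n → A,
    f X = f X' → (∀ j ∈ r.2, X j = X' j) → X r.1 = X' r.1

/-- any `(n, q)` index code of length `ℓ` for an instance `I(X, R)` of the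
Index Coding problem (with `q ≥ 2`, `n ≥ 1`) satisfies `ℓ ≥ n · μ(I)`, i.e. the rate
`λ(n, q) = ℓ/n` of an optimal code satisfies `λ(n, q) ≥ μ(I)`. -/
theorem index_code_length_ge_n_mul_mu {k n q ℓ : ℕ} (hq : 2 ≤ q) (hn : 1 ≤ n)
    (R : Finset (Fin k × Finset (Fin k))) (hR : ∀ r ∈ R, r.1 ∉ r.2)
    (f : (Fin k → Fin n → Fin q) → Fin ℓ → Fin q)
    (hf : IsIndexCode R n ℓ f) :
    n * mu R ≤ ℓ := by
  rcases R.eq_empty_or_nonempty with rfl | hRne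
  · simp [mu]
  have himg : (R.image Prod.snd).Nonempty := hRne.image _
  obtain ⟨H, hHmem, hH⟩ := Finset.exists_mem_eq_sup _ himg
    (fun H => ((R.filter fun r => r.2 = H).image Prod.fst).card)
  set S : Finset (Fin k) := (R.filter fun r => r.2 = H).image Prod.fst with hS
  have hmu : mu R = S.card := hH
  -- S and H are disjoint
  have hdisj : ∀ j ∈ H, j ∉ S := by
    intro j hjH hjS
    rw [hS, Finset.mem_image] at hjS
    obtain ⟨r, hr, hrj⟩ := hjS
    rw [Finset.mem_filter] at hr
    exact hR r hr.1 (by rw [hrj, hr.2]; exact hjH)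
  -- the embedding
  haveI : NeZero q := ⟨by omega⟩
  let ext : ({ x // x ∈ S } → Fin n → Fin q) → (Fin k → Fin n → Fin q) :=
    fun Y i => if h : i ∈ S then Y ⟨i, h⟩ else 0
  have hinj : Function.Injective (fun Y => f (ext Y)) := by
    intro Y Y' hYY'
    funext a
    obtain ⟨i, hiS⟩ := a
    have hiS2 := hiS
    rw [hS, Finset.mem_image] at hiS2
    obtain ⟨r, hr, hri⟩ := hiS2
    rw [Finset.mem_filter] at hr
    have hside : ∀ j ∈ r.2, ext Y j = ext Y' j := by
      intro j hj
      have : j ∉ S := hdisj j (hr.2 ▸ hj)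
      simp [ext, this]
    have heq := hf r hr.1 (ext Y) (ext Y') hYY' hside
    have h1 : ext Y r.1 = Y ⟨i, hiS⟩ := by simp only [ext, hri]; rw [dif_pos hiS]
    have h2 : ext Y' r.1 = Y' ⟨i, hiS⟩ := by simp only [ext, hri]; rw [dif_pos hiS]
    rw [h1, h2] at heq
    exact heq
  have hcard := Fintype.card_le_of_injective _ hinj
  simp only [Fintype.card_fun, Fintype.card_coe, Fintype.card_fin] at hcard
  rw [← pow_mul] at hcard
  have hle : n * S.card ≤ ℓ := by
    have h1q : 1 < q := by omega
    exact (Nat.pow_le_pow_iff_right h1q).mp hcard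
  rw [hmu]
  exact hle
end

section
/- Let N(G,X,δ) be an instance of the Network Coding problem with m ≥ 1 edges and k ≥ 1 messages, and let I_N(Y,R) be the index coding instance obtained from N by the reduction. Then μ(I_N) = m, where μ(I_N) is the maximum, over side-information sets H, of the number of distinct messages demanded by clients of I_N whose side-information set equals H. -/
/-- An instance of the Network Coding problem with `m` edges (indexed by `Fin m`),
`k` messages, and `d` output edges.  The input edges `S = {e_0, …, e_{k-1}}` are the
edges with index `< k`, and the output edges `D` are the edges with index `≥ m - d`.
`P e` is the set of parent edges of `e`.  Input edges have no parents (their tail has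
in-degree `0`), non-input edges have a parent, output edges have no children (their
head has out-degree `0`); `ord` witnesses acyclicity.  The demand function `δ` is
onto when restricted to output edges. -/
structure NetworkInstance (m k d : ℕ) where
  hkd : k + d ≤ m
  P : Fin m → Finset (Fin m)
  input_no_parent : ∀ e : Fin m, (e : ℕ) < k → P e = ∅
  noninput_has_parent : ∀ e : Fin m, k ≤ (e : ℕ) → P e ≠ ∅
  output_no_child : ∀ e e' : Fin m, e' ∈ P e → (e' : ℕ) < m - d
  ord : Fin m → ℕ
  acyclic : ∀ e e' : Fin m, e' ∈ P e → ord e' < ord e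
  δ : Fin m → Fin k
  δ_surj : ∀ i : Fin k, ∃ e : Fin m, m - d ≤ (e : ℕ) ∧ δ e = i

namespace NetworkInstance

variable {m k d : ℕ}

theorem k_le_m (N : NetworkInstance m k d) : k ≤ m :=
  le_trans (Nat.le_add_right k d) N.hkd

/-- `f` is an `(n, q)` network code for `N` over the alphabet `A` (with `|A| = q`):
`f e` is the global encoding function of edge `e`, satisfying
(N1) on input edges it outputs the corresponding message,
(N2) on output edges it outputs the demanded message,
(N3) on non-input edges it factors through the parents' encoding functions. -/
def IsNetworkCode (N : NetworkInstance m k d) {A : Type} (n : ℕ)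
    (f : Fin m → (Fin k → Fin n → A) → Fin n → A) : Prop :=
  (∀ (e : Fin m) (h : (e : ℕ) < k) (X : Fin k → Fin n → A), f e X = X ⟨(e : ℕ), h⟩) ∧
  (∀ e : Fin m, m - d ≤ (e : ℕ) → ∀ X : Fin k → Fin n → A, f e X = X (N.δ e)) ∧
  (∀ e : Fin m, k ≤ (e : ℕ) →
    ∃ φ : ({p : Fin m // p ∈ N.P e} → Fin n → A) → Fin n → A,
      ∀ X : Fin k → Fin n → A, f e X = φ fun p => f p.1 X)

/-- A linear `(n, q)` network code over the field `F` (with `|F| = q`): a network code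
all of whose global and local encoding functions are `F`-linear. -/
def IsLinearNetworkCode (N : NetworkInstance m k d) (F : Type) [Field F] (n : ℕ)
    (f : Fin m → (Fin k → Fin n → F) → Fin n → F) : Prop :=
  N.IsNetworkCode n f ∧ (∀ e : Fin m, IsLinearMap F (f e)) ∧
  (∀ e : Fin m, k ≤ (e : ℕ) →
    ∃ φ : ({p : Fin m // p ∈ N.P e} → Fin n → F) → Fin n → F,
      IsLinearMap F φ ∧ ∀ X : Fin k → Fin n → F, f e X = φ fun p => f p.1 X)

end NetworkInstance

namespace NetworkInstance

variable {m k d : ℕ}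

/-- The reduction from the Network Coding problem to the Index Coding problem.
The index coding instance `I_N` has message set `Y = {y_e : e ∈ E} ∪ {x_1, …, x_k}`
(indexed by `Fin k ⊕ Fin m`, where `Sum.inl i` is the message `x_i` and `Sum.inr e`
is the message `y_e`), and client set `R = R1 ∪ R2 ∪ R3 ∪ R4 ∪ R5` where
`R1 = {(x_i, {y_i}) : e_i ∈ S}`, `R2 = {(y_i, {x_i}) : e_i ∈ S}`,
`R3 = {(y_i, {y_j : e_j ∈ P(e_i)}) : e_i ∈ E \ S}`,
`R4 = {(δ(e_i), {y_i}) : e_i ∈ D}`, and `R5 = {(y_i, X) : e_i ∈ E}`. -/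
def reduction (N : NetworkInstance m k d) :
    Finset ((Fin k ⊕ Fin m) × Finset (Fin k ⊕ Fin m)) :=
  ((Finset.univ : Finset (Fin k)).image fun i =>
      (Sum.inl i, ({Sum.inr (Fin.castLE N.k_le_m i)} : Finset (Fin k ⊕ Fin m)))) ∪
  ((Finset.univ : Finset (Fin k)).image fun i =>
      (Sum.inr (Fin.castLE N.k_le_m i), ({Sum.inl i} : Finset (Fin k ⊕ Fin m)))) ∪
  ((Finset.univ.filter fun e : Fin m => k ≤ (e : ℕ)).image fun e =>
      (Sum.inr e, (N.P e).image Sum.inr)) ∪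
  ((Finset.univ.filter fun e : Fin m => m - d ≤ (e : ℕ)).image fun e =>
      (Sum.inl (N.δ e), ({Sum.inr e} : Finset (Fin k ⊕ Fin m)))) ∪
  ((Finset.univ : Finset (Fin m)).image fun e =>
      (Sum.inr e, (Finset.univ : Finset (Fin k)).image Sum.inl))

end NetworkInstance

/- Sending `x_i` to the input edge `e_i` and `y_e` to `e` is injective on the messages demanded
with any fixed side information `H`: `x_i` is demanded only with `H = {y_e}`, while `y_{e_i}` is
demanded only with `H = {x_i}` or `H = X`. Hence `μ(I_N) ≤ m`, and the `m` clients `(y_e, X)`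
of `R5` give `μ(I_N) ≥ m`. -/

section Demanded

variable {ι : Type} [DecidableEq ι]

def demanded (R : Finset (ι × Finset ι)) (H : Finset ι) : Finset ι :=
  (R.filter fun r => r.2 = H).image Prod.fst

theorem mem_demanded {R : Finset (ι × Finset ι)} {H : Finset ι} {y : ι} :
    y ∈ demanded R H ↔ (y, H) ∈ R := by
  simp [demanded]

theorem mu_le {R : Finset (ι × Finset ι)} {n : ℕ} (h : ∀ H, (demanded R H).card ≤ n) :
    mu R ≤ n :=
  Finset.sup_le fun H _ => h H

theorem card_demanded_le_mu (R : Finset (ι × Finset ι)) (H : Finset ι) :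
    (demanded R H).card ≤ mu R := by
  by_cases hH : H ∈ R.image Prod.snd
  · exact Finset.le_sup (f := fun H => (demanded R H).card) hH
  · have : demanded R H = ∅ := by
      ext y
      simp only [mem_demanded, Finset.notMem_empty, iff_false]
      exact fun hy => hH (Finset.mem_image_of_mem Prod.snd hy)
    rw [this, Finset.card_empty]
    exact Nat.zero_le _

end Demanded

namespace NetworkInstance

variable {m k d : ℕ} (N : NetworkInstance m k d)

theorem mem_reduction_iff (y : Fin k ⊕ Fin m) (H : Finset (Fin k ⊕ Fin m)) :
    (y, H) ∈ N.reduction ↔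
      (∃ i : Fin k, y = Sum.inl i ∧ H = {Sum.inr (Fin.castLE N.k_le_m i)}) ∨
      (∃ i : Fin k, y = Sum.inr (Fin.castLE N.k_le_m i) ∧ H = {Sum.inl i}) ∨
      (∃ e : Fin m, k ≤ (e : ℕ) ∧ y = Sum.inr e ∧ H = (N.P e).image Sum.inr) ∨
      (∃ e : Fin m, m - d ≤ (e : ℕ) ∧ y = Sum.inl (N.δ e) ∧ H = {Sum.inr e}) ∨
      (∃ e : Fin m, y = Sum.inr e ∧ H = Finset.univ.image Sum.inl) := by
  simp [reduction, eq_comm]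

theorem inr_mem_demanded_reduction_image_inl (e : Fin m) :
    Sum.inr e ∈ demanded N.reduction (Finset.univ.image Sum.inl) :=
  mem_demanded.mpr <|
    (N.mem_reduction_iff _ _).mpr <| .inr <| .inr <| .inr <| .inr ⟨e, rfl, rfl⟩

theorem exists_eq_singleton_inr_of_inl_mem_reduction {i : Fin k} {H : Finset (Fin k ⊕ Fin m)}
    (h : (Sum.inl i, H) ∈ N.reduction) : ∃ e, H = {Sum.inr e} := by
  rcases (N.mem_reduction_iff _ _).mp h with
    ⟨j, -, rfl⟩ | ⟨j, hy, -⟩ | ⟨e, -, hy, -⟩ | ⟨e, -, -, rfl⟩ | ⟨e, hy, -⟩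
  · exact ⟨_, rfl⟩
  · simp at hy
  · simp at hy
  · exact ⟨e, rfl⟩
  · simp at hy

theorem inr_castLE_notMem_reduction_of_inl_mem {i : Fin k} {H : Finset (Fin k ⊕ Fin m)}
    (h : (Sum.inl i, H) ∈ N.reduction) :
    (Sum.inr (Fin.castLE N.k_le_m i), H) ∉ N.reduction := by
  obtain ⟨e, rfl⟩ := N.exists_eq_singleton_inr_of_inl_mem_reduction h
  rw [mem_reduction_iff]
  rintro (⟨j, hy, -⟩ | ⟨j, -, hH⟩ | ⟨e', he', hy, -⟩ | ⟨e', -, hy, -⟩ |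
    ⟨e', -, hH⟩)
  · simp at hy
  · simp at hH
  · have hi : (i : ℕ) = e' := congrArg Fin.val (Sum.inr_injective hy)
    omega
  · simp at hy
  · have : Sum.inr e ∈ Finset.univ.image (Sum.inl : Fin k → Fin k ⊕ Fin m) :=
      hH ▸ Finset.mem_singleton_self _
    simp at this

theorem injOn_demanded_reduction (H : Finset (Fin k ⊕ Fin m)) :
    Set.InjOn (Sum.elim (Fin.castLE N.k_le_m) id) (demanded N.reduction H) := by
  rintro (i | e) ha (j | e') hb hab
  · simpa using hab
  · obtain rfl : Fin.castLE N.k_le_m i = e' := hab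
    exact N.inr_castLE_notMem_reduction_of_inl_mem (mem_demanded.mp ha)
      (mem_demanded.mp hb) |>.elim
  · obtain rfl : e = Fin.castLE N.k_le_m j := hab
    exact N.inr_castLE_notMem_reduction_of_inl_mem (mem_demanded.mp hb)
      (mem_demanded.mp ha) |>.elim
  · simpa using hab

end NetworkInstance

theorem mu_reduction_eq_m_general {m k d : ℕ} (N : NetworkInstance m k d) :
    mu N.reduction = m := by
  refine le_antisymm (mu_le fun H => ?_) ?_
  · simpa using Finset.card_le_card_of_injOn (t := Finset.univ) _ (fun _ _ => by simp)
      (N.injOn_demanded_reduction H)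
  · calc m = (Finset.univ.image (Sum.inr : Fin m → Fin k ⊕ Fin m)).card := by
          rw [Finset.card_image_of_injective _ Sum.inr_injective, Finset.card_univ,
            Fintype.card_fin]
      _ ≤ (demanded N.reduction (Finset.univ.image Sum.inl)).card :=
          Finset.card_le_card fun _ hy => by
            obtain ⟨e, -, rfl⟩ := Finset.mem_image.mp hy
            exact N.inr_mem_demanded_reduction_image_inl e
      _ ≤ mu N.reduction := card_demanded_le_mu _ _

/-- for a network coding instance `N` with `m ≥ 1` edges and `k ≥ 1`
messages, the index coding instance `I_N` obtained by the reduction satisfies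
`μ(I_N) = m`. -/
theorem mu_reduction_eq_m {m k d : ℕ} (hm : 1 ≤ m) (hk : 1 ≤ k)
    (N : NetworkInstance m k d) :
    mu N.reduction = m :=
  mu_reduction_eq_m_general N
end

section
/- Let N(G,X,δ) be an instance of the Network Coding problem with m edges and k messages, and let I_N(Y,R) be the index coding instance obtained from N by the reduction. If there exists a linear (n,q) network code for N over the finite field F_q, then there exists a linear (n,q) index code for I_N of length ℓ = n·m, i.e., a linear index code achieving rate λ*(n,q) = m = μ(I_N). -/
/-- if a network coding instance `N` (with `m` edges and `k` messages)
has a linear `(n, q)` network code over the finite field `F = F_q`, then the index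
coding instance `I_N` obtained by the reduction has a linear `(n, q)` index code of
length `ℓ = n · m`, i.e., a linear index code of rate `λ*(n, q) = m = μ(I_N)`. -/
theorem linear_network_code_to_linear_index_code {m k d : ℕ}
    (N : NetworkInstance m k d) (F : Type) [Field F] [Fintype F] (n : ℕ)
    (f : Fin m → (Fin k → Fin n → F) → Fin n → F)
    (hf : N.IsLinearNetworkCode F n f) :
    ∃ g : ((Fin k ⊕ Fin m) → Fin n → F) → Fin (n * m) → F,
      IsLinearMap F g ∧ IsIndexCode N.reduction n (n * m) g := by
  obtain ⟨⟨hN1, hN2, _⟩, hlin, hloc⟩ := hf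
  refine ⟨fun Z t => Z (Sum.inr (finProdFinEquiv.symm t).2) (finProdFinEquiv.symm t).1
      + f (finProdFinEquiv.symm t).2 (fun i => Z (Sum.inl i)) (finProdFinEquiv.symm t).1,
    ⟨?_, ?_⟩, ?_⟩
  · intro Z Z'
    funext t
    have h := (hlin (finProdFinEquiv.symm t).2).map_add
      (fun i => Z (Sum.inl i)) (fun i => Z' (Sum.inl i))
    have h2 : (fun i => (Z + Z') (Sum.inl i))
        = (fun i => Z (Sum.inl i)) + (fun i => Z' (Sum.inl i)) := rfl
    simp only [Pi.add_apply, h2]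
    rw [show (fun i => Z (Sum.inl i) + Z' (Sum.inl i))
        = (fun i => Z (Sum.inl i)) + (fun i => Z' (Sum.inl i)) from rfl, h]
    simp only [Pi.add_apply]
    ring
  · intro c Z
    funext t
    have h := (hlin (finProdFinEquiv.symm t).2).map_smul c (fun i => Z (Sum.inl i))
    have h2 : (fun i => (c • Z) (Sum.inl i)) = c • (fun i => Z (Sum.inl i)) := rfl
    simp only [Pi.smul_apply, h2]
    rw [show (fun i => c • Z (Sum.inl i)) = c • (fun i => Z (Sum.inl i)) from rfl, h]
    simp only [Pi.smul_apply, smul_eq_mul]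
    ring
  · intro r hr Z Z' hg hside
    set X : Fin k → Fin n → F := fun i => Z (Sum.inl i) with hX
    set X' : Fin k → Fin n → F := fun i => Z' (Sum.inl i) with hX'
    have key : ∀ (e : Fin m) (j : Fin n),
        Z (Sum.inr e) j + f e X j = Z' (Sum.inr e) j + f e X' j := by
      intro e j
      have := congrFun hg (finProdFinEquiv (j, e))
      simpa using this
    have A : ∀ e : Fin m, f e X = f e X' → Z (Sum.inr e) = Z' (Sum.inr e) := by
      intro e he
      funext j
      have := key e j
      rw [he] at this
      exact add_right_cancel this
    have B : ∀ e : Fin m, Z (Sum.inr e) = Z' (Sum.inr e) → f e X = f e X' := by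
      intro e he
      funext j
      have := key e j
      rw [he] at this
      exact add_left_cancel this
    simp only [NetworkInstance.reduction, Finset.mem_union, Finset.mem_image,
      Finset.mem_filter, Finset.mem_univ, true_and] at hr
    rcases hr with ((((⟨i, hi⟩ | ⟨i, hi⟩) | ⟨e, he, hre⟩) | ⟨e, he, hre⟩) | ⟨e, he⟩)
    · -- R1
      subst hi
      have hz : Z (Sum.inr (Fin.castLE N.k_le_m i)) = Z' (Sum.inr (Fin.castLE N.k_le_m i)) :=
        hside _ (Finset.mem_singleton_self _)
      have := B _ hz
      have hlt : ((Fin.castLE N.k_le_m i : Fin m) : ℕ) < k := i.isLt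
      rw [hN1 _ hlt X, hN1 _ hlt X'] at this
      have hii : (⟨((Fin.castLE N.k_le_m i : Fin m) : ℕ), hlt⟩ : Fin k) = i := rfl
      rw [hii] at this
      exact this
    · -- R2
      subst hi
      have hz : Z (Sum.inl i) = Z' (Sum.inl i) := hside _ (Finset.mem_singleton_self _)
      apply A
      have hlt : ((Fin.castLE N.k_le_m i : Fin m) : ℕ) < k := i.isLt
      rw [hN1 _ hlt X, hN1 _ hlt X']
      exact hz
    · -- R3
      subst hre
      obtain ⟨φ, hφlin, hφ⟩ := hloc e he
      apply A
      rw [hφ X, hφ X']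
      have hpar : (fun p : {p // p ∈ N.P e} => f p.1 X) = fun p => f p.1 X' := by
        funext p
        exact B _ (hside _ (Finset.mem_image_of_mem _ p.2))
      rw [hpar]
    · -- R4
      subst hre
      have hz : Z (Sum.inr e) = Z' (Sum.inr e) := hside _ (Finset.mem_singleton_self _)
      have := B _ hz
      rw [hN2 _ he X, hN2 _ he X'] at this
      exact this
    · -- R5
      subst he
      apply A
      have hxx : X = X' := by
        funext i
        exact hside _ (Finset.mem_image_of_mem _ (Finset.mem_univ i))
      rw [hxx]
end

section
/- Let N(G,X,δ) be an instance of the Network Coding problem with m edges and k messages, and let I_N(Y,R) be the index coding instance obtained from N by the reduction. If there exists a linear (n,q) index code for I_N of length ℓ = n·m over the finite field F_q (i.e., a linear index code achieving rate m = μ(I_N)), then there exists a linear (n,q) network code for N over F_q. -/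
theorem LinearMap.exists_eq_comp_of_ker_le {K V W₁ W₂ : Type*} [DivisionRing K]
    [AddCommGroup V] [Module K V] [AddCommGroup W₁] [Module K W₁]
    [AddCommGroup W₂] [Module K W₂] (p : V →ₗ[K] W₁) (q : V →ₗ[K] W₂)
    (hpq : LinearMap.ker p ≤ LinearMap.ker q) : ∃ h : W₁ →ₗ[K] W₂, q = h ∘ₗ p := by
  obtain ⟨s, hs⟩ := ((LinearMap.ker p).liftQ p le_rfl).exists_leftInverse_of_injective
    (Submodule.ker_liftQ_eq_bot _ _ _ le_rfl)
  refine ⟨(LinearMap.ker p).liftQ q hpq ∘ₗ s, LinearMap.ext fun x => ?_⟩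
  have hsx : s (p x) = Submodule.Quotient.mk x := LinearMap.congr_fun hs (Submodule.Quotient.mk x)
  simp [hsx]

theorem LinearMap.exists_map_prod_eq_zero_of_bijective_comp_inr {R V₁ V₂ W : Type*} [Ring R]
    [AddCommGroup V₁] [Module R V₁] [AddCommGroup V₂] [Module R V₂]
    [AddCommGroup W] [Module R W] (G : V₁ × V₂ →ₗ[R] W)
    (hG : Function.Bijective (G ∘ₗ LinearMap.inr R V₁ V₂)) :
    ∃ Y : V₁ →ₗ[R] V₂, ∀ x, G (x, Y x) = 0 := by
  let E := LinearEquiv.ofBijective _ hG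
  refine ⟨-(E.symm.toLinearMap ∘ₗ G ∘ₗ LinearMap.inl R V₁ V₂), fun x => ?_⟩
  set y := E.symm (G (x, 0))
  have hy : G (0, y) = G (x, 0) := E.apply_symm_apply (G (x, 0))
  calc G (x, -y) = G (x, 0) - G (0, y) := by rw [← map_sub]; simp
    _ = 0 := by rw [hy, sub_self]

theorem IsIndexCode.eq_zero_of_map_eq_zero {ι A : Type} [Zero A] {R : Finset (ι × Finset ι)}
    {n ℓ : ℕ} {f : (ι → Fin n → A) → Fin ℓ → A} (hf : IsIndexCode R n ℓ f) (hf0 : f 0 = 0)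
    {r : ι × Finset ι} (hr : r ∈ R) {X : ι → Fin n → A} (hX : f X = 0)
    (hH : ∀ j ∈ r.2, X j = 0) : X r.1 = 0 :=
  hf r hr X 0 (hX.trans hf0.symm) hH

namespace NetworkInstance

variable {m k d : ℕ} (N : NetworkInstance m k d)

theorem input_client_mem_reduction (i : Fin k) :
    ((Sum.inr (Fin.castLE N.k_le_m i), {Sum.inl i}) :
      (Fin k ⊕ Fin m) × Finset (Fin k ⊕ Fin m)) ∈ N.reduction := by
  simp [reduction]

theorem parent_client_mem_reduction {e : Fin m} (he : k ≤ (e : ℕ)) :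
    ((Sum.inr e, (N.P e).image Sum.inr) :
      (Fin k ⊕ Fin m) × Finset (Fin k ⊕ Fin m)) ∈ N.reduction := by
  simp [reduction, he]

theorem output_client_mem_reduction {e : Fin m} (he : m - d ≤ (e : ℕ)) :
    ((Sum.inl (N.δ e), {Sum.inr e}) :
      (Fin k ⊕ Fin m) × Finset (Fin k ⊕ Fin m)) ∈ N.reduction := by
  simp [reduction, Nat.sub_le_iff_le_add.mp he]

theorem edge_client_mem_reduction (e : Fin m) :
    ((Sum.inr e, Finset.univ.image Sum.inl) :
      (Fin k ⊕ Fin m) × Finset (Fin k ⊕ Fin m)) ∈ N.reduction := by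
  simp [reduction]

theorem exists_linearMap_map_sumElim_eq_zero {F : Type} [Field F] {n : ℕ}
    {g : ((Fin k ⊕ Fin m) → Fin n → F) → Fin (n * m) → F}
    (hg_lin : IsLinearMap F g) (hg : IsIndexCode N.reduction n (n * m) g) :
    ∃ Y : (Fin k → Fin n → F) →ₗ[F] (Fin m → Fin n → F), ∀ x, g (Sum.elim x (Y x)) = 0 := by
  let G := IsLinearMap.mk' g hg_lin ∘ₗ
    (LinearEquiv.sumArrowLequivProdArrow (Fin k) (Fin m) F (Fin n → F)).symm.toLinearMap
  have hinj : Function.Injective (G ∘ₗ LinearMap.inr F _ _) := fun y y' hyy =>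
    funext fun e => hg _ (N.edge_client_mem_reduction e) (Sum.elim 0 y) (Sum.elim 0 y') hyy
      (by simp)
  have hrank : Module.finrank F (Fin m → Fin n → F) = Module.finrank F (Fin (n * m) → F) := by
    simp [Module.finrank_pi_fintype, mul_comm]
  exact G.exists_map_prod_eq_zero_of_bijective_comp_inr
    ⟨hinj, (LinearMap.injective_iff_surjective_of_finrank_eq_finrank hrank).1 hinj⟩

section LinearCode

variable {R : Type} [Semiring R] {n : ℕ} (Y : (Fin k → Fin n → R) →ₗ[R] (Fin m → Fin n → R))

def linearCodeOf (e : Fin m) : (Fin k → Fin n → R) →ₗ[R] (Fin n → R) :=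
  if h : (e : ℕ) < k then LinearMap.proj ⟨e, h⟩
  else if m - d ≤ (e : ℕ) then LinearMap.proj (N.δ e)
  else LinearMap.proj e ∘ₗ Y

theorem linearCodeOf_of_lt {e : Fin m} (he : (e : ℕ) < k) (X : Fin k → Fin n → R) :
    N.linearCodeOf Y e X = X ⟨e, he⟩ := by
  simp [linearCodeOf, he]

theorem linearCodeOf_of_sub_le {e : Fin m} (he : m - d ≤ (e : ℕ)) (X : Fin k → Fin n → R) :
    N.linearCodeOf Y e X = X (N.δ e) := by
  have hek : ¬ (e : ℕ) < k := by have := N.hkd; omega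
  simp [linearCodeOf, he, hek]

theorem linearCodeOf_of_le_of_lt {e : Fin m} (hke : k ≤ (e : ℕ)) (hed : (e : ℕ) < m - d)
    (X : Fin k → Fin n → R) : N.linearCodeOf Y e X = Y X e := by
  simp [linearCodeOf, hke.not_gt, hed.not_ge]

theorem linearCodeOf_eq_zero_of_parents_eq_zero {ℓ : ℕ}
    {g : ((Fin k ⊕ Fin m) → Fin n → R) → Fin ℓ → R}
    (hg : IsIndexCode N.reduction n ℓ g) (hg0 : g 0 = 0) (hY : ∀ x, g (Sum.elim x (Y x)) = 0)
    {e : Fin m} (he : k ≤ (e : ℕ)) {X : Fin k → Fin n → R}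
    (hX : ∀ p ∈ N.P e, N.linearCodeOf Y p X = 0) : N.linearCodeOf Y e X = 0 := by
  have decode := fun {r} (hr : r ∈ N.reduction) => hg.eq_zero_of_map_eq_zero hg0 hr (hY X)
  have hparents : ∀ p ∈ N.P e, Y X p = 0 := by
    intro p hp
    by_cases hpk : (p : ℕ) < k
    · have hXp : X ⟨p, hpk⟩ = 0 := (N.linearCodeOf_of_lt Y hpk X).symm.trans (hX p hp)
      exact decode (N.input_client_mem_reduction ⟨p, hpk⟩) (by simpa using hXp)
    · rw [← N.linearCodeOf_of_le_of_lt Y (not_lt.1 hpk) (N.output_no_child e p hp)]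
      exact hX p hp
  have hYe : Y X e = 0 := decode (N.parent_client_mem_reduction he) (by simpa using hparents)
  by_cases heo : m - d ≤ (e : ℕ)
  · rw [N.linearCodeOf_of_sub_le Y heo]
    exact decode (N.output_client_mem_reduction heo) (by simpa using hYe)
  · rwa [N.linearCodeOf_of_le_of_lt Y he (not_le.1 heo)]

end LinearCode

theorem isLinearNetworkCode_linearCodeOf {F : Type} [Field F] {n ℓ : ℕ}
    {g : ((Fin k ⊕ Fin m) → Fin n → F) → Fin ℓ → F}
    (hg : IsIndexCode N.reduction n ℓ g) (hg0 : g 0 = 0)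
    {Y : (Fin k → Fin n → F) →ₗ[F] (Fin m → Fin n → F)} (hY : ∀ x, g (Sum.elim x (Y x)) = 0) :
    N.IsLinearNetworkCode F n fun e => N.linearCodeOf Y e := by
  have hlocal : ∀ e : Fin m, k ≤ (e : ℕ) → ∃ φ : ({p // p ∈ N.P e} → Fin n → F) →ₗ[F] Fin n → F,
      N.linearCodeOf Y e = φ ∘ₗ LinearMap.pi fun p => N.linearCodeOf Y p.1 := fun e he =>
    LinearMap.exists_eq_comp_of_ker_le _ _ fun X hX =>
      N.linearCodeOf_eq_zero_of_parents_eq_zero Y hg hg0 hY he fun p hp => congr_fun hX ⟨p, hp⟩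
  refine ⟨⟨fun _ => N.linearCodeOf_of_lt Y, fun _ => N.linearCodeOf_of_sub_le Y, fun e he => ?_⟩,
    fun e => (N.linearCodeOf Y e).isLinear, fun e he => ?_⟩ <;>
  obtain ⟨φ, hφ⟩ := hlocal e he
  · exact ⟨φ, fun X => LinearMap.congr_fun hφ X⟩
  · exact ⟨φ, φ.isLinear, fun X => LinearMap.congr_fun hφ X⟩

end NetworkInstance

theorem linear_index_code_to_linear_network_code_general {m k d : ℕ}
    (N : NetworkInstance m k d) (F : Type) [Field F] (n : ℕ)
    (g : ((Fin k ⊕ Fin m) → Fin n → F) → Fin (n * m) → F)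
    (hg_lin : IsLinearMap F g) (hg : IsIndexCode N.reduction n (n * m) g) :
    ∃ f : Fin m → (Fin k → Fin n → F) → Fin n → F,
      N.IsLinearNetworkCode F n f := by
  obtain ⟨Y, hY⟩ := N.exists_linearMap_map_sumElim_eq_zero hg_lin hg
  exact ⟨_, N.isLinearNetworkCode_linearCodeOf hg (IsLinearMap.mk' g hg_lin).map_zero hY⟩

/-- if the index coding instance `I_N` obtained by the reduction from a
network coding instance `N` (with `m` edges and `k` messages) has a linear `(n, q)`
index code of length `ℓ = n · m` over the finite field `F = F_q` (i.e., a linear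
index code of rate `m = μ(I_N)`), then `N` has a linear `(n, q)` network code
over `F`. -/
theorem linear_index_code_to_linear_network_code {m k d : ℕ}
    (N : NetworkInstance m k d) (F : Type) [Field F] [Fintype F] (n : ℕ)
    (g : ((Fin k ⊕ Fin m) → Fin n → F) → Fin (n * m) → F)
    (hg_lin : IsLinearMap F g) (hg : IsIndexCode N.reduction n (n * m) g) :
    ∃ f : Fin m → (Fin k → Fin n → F) → Fin n → F,
      N.IsLinearNetworkCode F n f :=
  linear_index_code_to_linear_network_code_general N F n g hg_lin hg
end

section
/- Let N(G,X,δ) be an instance of the Network Coding problem with m edges and k messages, and let I_N(Y,R) be the index coding instance obtained from N by the reduction. If there exists an (n,q) network code for N (not necessarily linear), then there exists an (n,q) index code for I_N of length ℓ = n·m, i.e., an index code achieving rate λ(n,q) = m = μ(I_N). -/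
/-- if a network coding instance `N` (with `m` edges and `k` messages)
has an `(n, q)` network code (not necessarily linear), then the index coding instance
`I_N` obtained by the reduction has an `(n, q)` index code of length `ℓ = n · m`,
i.e., an index code of rate `λ(n, q) = m = μ(I_N)`. -/
theorem network_code_to_index_code {m k d : ℕ}
    (N : NetworkInstance m k d) (n q : ℕ)
    (f : Fin m → (Fin k → Fin n → Fin q) → Fin n → Fin q)
    (hf : N.IsNetworkCode n f) :
    ∃ g : ((Fin k ⊕ Fin m) → Fin n → Fin q) → Fin (n * m) → Fin q,
      IsIndexCode N.reduction n (n * m) g := by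
  obtain ⟨h1, h2, h3⟩ := hf
  rcases q with _ | q'
  · -- degenerate alphabet of size 0
    have hg : ∃ g : ((Fin k ⊕ Fin m) → Fin n → Fin 0) → Fin (n * m) → Fin 0, True := by
      rcases Nat.eq_zero_or_pos (n * m) with h | h
      · exact ⟨fun _ j => (Fin.cast h j).elim0, trivial⟩
      · have hn : 0 < n := Nat.pos_of_ne_zero (by rintro rfl; simp at h)
        have hm : 0 < m := Nat.pos_of_ne_zero (by rintro rfl; simp at h)
        exact ⟨fun Z _ => (Z (Sum.inr ⟨0, hm⟩) ⟨0, hn⟩).elim0, trivial⟩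
    obtain ⟨g, -⟩ := hg
    refine ⟨g, fun r _ X X' _ _ => funext fun t => (X r.1 t).elim0⟩
  · -- alphabet of size q' + 1, which carries a group structure
    set Xp : ((Fin k ⊕ Fin m) → Fin n → Fin (q'+1)) → (Fin k → Fin n → Fin (q'+1)) :=
      fun Z i => Z (Sum.inl i) with hXp
    refine ⟨fun Z j =>
        Z (Sum.inr (finProdFinEquiv.symm j).2) (finProdFinEquiv.symm j).1 -
          f (finProdFinEquiv.symm j).2 (Xp Z) (finProdFinEquiv.symm j).1, ?_⟩
    intro r hr X X' hgXX hH
    -- key consequence of equal broadcasts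
    have key : ∀ e : Fin m, ∀ t : Fin n,
        X (Sum.inr e) t - f e (Xp X) t = X' (Sum.inr e) t - f e (Xp X') t := by
      intro e t
      have := congrFun hgXX (finProdFinEquiv (t, e))
      simpa using this
    have keyl : ∀ e : Fin m, f e (Xp X) = f e (Xp X') → X (Sum.inr e) = X' (Sum.inr e) := by
      intro e he
      funext t
      have := key e t
      rw [he] at this
      exact sub_left_injective this
    have keyr : ∀ e : Fin m, X (Sum.inr e) = X' (Sum.inr e) → f e (Xp X) = f e (Xp X') := by
      intro e he
      funext t
      have := key e t
      rw [he] at this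
      exact sub_right_injective this
    simp only [NetworkInstance.reduction, Finset.mem_union, Finset.mem_image,
      Finset.mem_filter, Finset.mem_univ, true_and] at hr
    rcases hr with ((((⟨i, hi⟩ | ⟨i, hi⟩) | ⟨e, he, hee⟩) | ⟨e, he, hee⟩) | ⟨e, he⟩)
    · -- R1 : (x_i, {y_i})
      subst hi
      have hy : X (Sum.inr (Fin.castLE N.k_le_m i)) = X' (Sum.inr (Fin.castLE N.k_le_m i)) := by
        apply hH; simp
      have hfe := keyr _ hy
      have hlt : ((Fin.castLE N.k_le_m i : Fin m) : ℕ) < k := i.isLt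
      rw [h1 _ hlt (Xp X), h1 _ hlt (Xp X')] at hfe
      have : (⟨((Fin.castLE N.k_le_m i : Fin m) : ℕ), hlt⟩ : Fin k) = i := by
        apply Fin.ext; rfl
      rw [this] at hfe
      exact hfe
    · -- R2 : (y_i, {x_i})
      subst hi
      apply keyl
      have hx : X (Sum.inl i) = X' (Sum.inl i) := by apply hH; simp
      have hlt : ((Fin.castLE N.k_le_m i : Fin m) : ℕ) < k := i.isLt
      rw [h1 _ hlt (Xp X), h1 _ hlt (Xp X')]
      have : (⟨((Fin.castLE N.k_le_m i : Fin m) : ℕ), hlt⟩ : Fin k) = i := by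
        apply Fin.ext; rfl
      rw [this]
      exact hx
    · -- R3 : (y_e, parents)
      subst hee
      apply keyl
      obtain ⟨φ, hφ⟩ := h3 e he
      rw [hφ (Xp X), hφ (Xp X')]
      have hpar : (fun p : {p // p ∈ N.P e} => f p.1 (Xp X)) = fun p => f p.1 (Xp X') := by
        funext p
        apply keyr
        apply hH
        simp only [Finset.mem_image]
        exact ⟨p.1, p.2, rfl⟩
      rw [hpar]
    · -- R4 : (δ e, {y_e})
      subst hee
      have hy : X (Sum.inr e) = X' (Sum.inr e) := by apply hH; simp
      have hfe := keyr _ hy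
      rw [h2 _ he (Xp X), h2 _ he (Xp X')] at hfe
      exact hfe
    · -- R5 : (y_e, all x)
      subst he
      apply keyl
      have hXX : Xp X = Xp X' := by
        funext i
        apply hH
        simp
      rw [hXX]
end

section
/- There exists an instance N of the Network Coding problem (the non-Pappus network) such that N has no scalar linear network code over any field, but N has a linear network code of block length 2 over the field F_3 (i.e., a (2,3) linear network code). -/
def Ptbl : Fin 28 → Finset (Fin 28) :=
  ![∅,∅,∅,∅, {0,1},{0,1},{2,3},{2,3}, {4},{4},{4},{4},
    {5,6},{5,6},{5,6},{5,6}, {7},{7},{7},{7},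
    {8,12,16},{8,12,16},{9,13,17},{9,13,17},{10,14,18},{10,14,18},{11,15,19},{11,15,19}]

def dtbl : Fin 28 → Fin 4 :=
  ![0,0,0,0, 0,0,0,0, 0,0,0,0, 0,0,0,0, 0,0,0,0, 0,2, 0,3, 1,2, 1,3]

def net : NetworkInstance 28 4 8 where
  hkd := by decide
  P := Ptbl
  input_no_parent := by decide
  noninput_has_parent := by decide
  output_no_child := by decide
  ord := Fin.val
  acyclic := by decide
  δ := dtbl
  δ_surj := by decide

def tbl : Fin 28 → Fin 2 → Fin 4 × Fin 2 :=
  ![![(0,0),(0,1)], ![(1,0),(1,1)], ![(2,0),(2,1)], ![(3,0),(3,1)],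
    ![(0,0),(1,0)], ![(0,1),(1,1)], ![(2,0),(3,0)], ![(2,1),(3,1)],
    ![(0,0),(1,0)], ![(0,0),(1,0)], ![(0,0),(1,0)], ![(0,0),(1,0)],
    ![(0,1),(2,0)], ![(0,1),(3,0)], ![(1,1),(2,0)], ![(1,1),(3,0)],
    ![(2,1),(3,1)], ![(2,1),(3,1)], ![(2,1),(3,1)], ![(2,1),(3,1)],
    ![(0,0),(0,1)], ![(2,0),(2,1)],
    ![(0,0),(0,1)], ![(3,0),(3,1)],
    ![(1,0),(1,1)], ![(2,0),(2,1)],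
    ![(1,0),(1,1)], ![(3,0),(3,1)]]

def code (e : Fin 28) (X : Fin 4 → Fin 2 → ZMod 3) (t : Fin 2) : ZMod 3 :=
  X (tbl e t).1 (tbl e t).2

lemma tbl_parent : ∀ e : Fin 28, 4 ≤ e.val → ∀ t : Fin 2,
    ∃ p ∈ net.P e, ∃ s : Fin 2, tbl p s = tbl e t := by decide

lemma tbl_input : ∀ e : Fin 28, ∀ t : Fin 2, e.val < 4 →
    ((tbl e t).1.val = e.val ∧ (tbl e t).2 = t) := by decide

lemma tbl_output : ∀ e : Fin 28, 20 ≤ e.val → ∀ t : Fin 2, tbl e t = (dtbl e, t) := by decide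

lemma exists_phi (e : Fin 28) (he : 4 ≤ e.val) :
    ∃ φ : ({p : Fin 28 // p ∈ net.P e} → Fin 2 → ZMod 3) → Fin 2 → ZMod 3,
      IsLinearMap (ZMod 3) φ ∧ ∀ X, code e X = φ fun p => code p.1 X := by
  choose p hp s hs using tbl_parent e he
  refine ⟨fun v t => v ⟨p t, hp t⟩ (s t), ⟨fun _ _ => rfl, fun _ _ => rfl⟩, fun X => ?_⟩
  funext t
  show X (tbl e t).1 (tbl e t).2 = X (tbl (p t) (s t)).1 (tbl (p t) (s t)).2
  rw [hs t]

lemma code_linear : net.IsLinearNetworkCode (ZMod 3) 2 code := by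
  refine ⟨⟨?_, ?_, ?_⟩, fun e => ⟨fun _ _ => rfl, fun _ _ => rfl⟩, fun e he => exists_phi e he⟩
  · intro e h X
    funext t
    obtain ⟨h1, h2⟩ := tbl_input e t h
    show X (tbl e t).1 (tbl e t).2 = X ⟨e.val, h⟩ t
    rw [h2]
    congr 1
    exact Fin.ext h1
  · intro e he X
    funext t
    show X (tbl e t).1 (tbl e t).2 = X (net.δ e) t
    rw [tbl_output e (by omega) t]
    rfl
  · intro e he
    obtain ⟨φ, _, hφ⟩ := exists_phi e he
    exact ⟨φ, hφ⟩

lemma endgame (F : Type) [Field F]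
    (a0 a1 g2 g3 w00 w01 w02 w03 w10 w11 w12 w13 w20 w21 w22 w23 w30 w31 w32 w33 : F)
    (KF0 : ∀ x0 x1 x2 x3 : F, a0*x0 + a1*x1 = 0 →
      w00*x0 + w01*x1 + w02*x2 + w03*x3 = 0 → g2*x2 + g3*x3 = 0 → x0 = 0 ∧ x2 = 0)
    (KF1 : ∀ x0 x1 x2 x3 : F, a0*x0 + a1*x1 = 0 →
      w10*x0 + w11*x1 + w12*x2 + w13*x3 = 0 → g2*x2 + g3*x3 = 0 → x0 = 0 ∧ x3 = 0)
    (KF2 : ∀ x0 x1 x2 x3 : F, a0*x0 + a1*x1 = 0 →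
      w20*x0 + w21*x1 + w22*x2 + w23*x3 = 0 → g2*x2 + g3*x3 = 0 → x1 = 0 ∧ x2 = 0)
    (KF3 : ∀ x0 x1 x2 x3 : F, a0*x0 + a1*x1 = 0 →
      w30*x0 + w31*x1 + w32*x2 + w33*x3 = 0 → g2*x2 + g3*x3 = 0 → x1 = 0 ∧ x3 = 0) :
    False := by
  by_cases ha : a0 = 0 ∧ a1 = 0
  · obtain ⟨ha0, ha1⟩ := ha
    by_cases hg : g2 = 0 ∧ g3 = 0
    · obtain ⟨hg2, hg3⟩ := hg
      have h1 := (KF0 w02 0 (-w00) 0 (by rw [ha0, ha1]; ring) (by ring)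
        (by rw [hg2, hg3]; ring)).2
      have hw00 : w00 = 0 := neg_eq_zero.mp h1
      exact one_ne_zero ((KF0 1 0 0 0 (by rw [ha0, ha1]; ring)
        (by rw [hw00]; ring) (by rw [hg2, hg3]; ring)).1)
    · -- a = 0, g ≠ 0
      have hB0 := (KF0 (w02*g3 - w03*g2) 0 (-(g3*w00)) (g2*w00)
        (by rw [ha0, ha1]; ring) (by ring) (by ring)).1
      have hg3' := (KF0 0 0 g3 (-g2) (by rw [ha0, ha1]; ring)
        (by linear_combination hB0) (by ring)).2
      have hB1 := (KF1 (w12*g3 - w13*g2) 0 (-(g3*w10)) (g2*w10)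
        (by rw [ha0, ha1]; ring) (by ring) (by ring)).1
      have hg2' := (KF1 0 0 g3 (-g2) (by rw [ha0, ha1]; ring)
        (by linear_combination hB1) (by ring)).2
      exact hg ⟨neg_eq_zero.mp hg2', hg3'⟩
  · by_cases hg : g2 = 0 ∧ g3 = 0
    · obtain ⟨hg2, hg3⟩ := hg
      by_cases ha1 : a1 = 0
      · -- a1 = 0, a0 ≠ 0 : use sink 2
        have ha0 : a0 ≠ 0 := fun h => ha ⟨h, ha1⟩
        have hw22 : w22 = 0 := by
          have := (KF2 (a1*w22) (-(a0*w22)) (-(w20*a1 - w21*a0)) 0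
            (by ring) (by ring) (by rw [hg2, hg3]; ring)).1
          have := neg_eq_zero.mp this
          rcases mul_eq_zero.mp this with h | h
          · exact absurd h ha0
          · exact h
        have hw23 : w23 = 0 := by
          have := (KF2 (a1*w23) (-(a0*w23)) 0 (-(w20*a1 - w21*a0))
            (by ring) (by ring) (by rw [hg2, hg3]; ring)).1
          have := neg_eq_zero.mp this
          rcases mul_eq_zero.mp this with h | h
          · exact absurd h ha0
          · exact h
        exact one_ne_zero ((KF2 0 0 1 0 (by ring) (by rw [hw22]; ring)
          (by rw [hg2, hg3]; ring)).2)
      · -- a1 ≠ 0 : use sink 0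
        have hw02 : w02 = 0 := by
          have := (KF0 (a1*w02) (-(a0*w02)) (-(w00*a1 - w01*a0)) 0
            (by ring) (by ring) (by rw [hg2, hg3]; ring)).1
          rcases mul_eq_zero.mp this with h | h
          · exact absurd h ha1
          · exact h
        have hw03 : w03 = 0 := by
          have := (KF0 (a1*w03) (-(a0*w03)) 0 (-(w00*a1 - w01*a0))
            (by ring) (by ring) (by rw [hg2, hg3]; ring)).1
          rcases mul_eq_zero.mp this with h | h
          · exact absurd h ha1
          · exact h
        exact one_ne_zero ((KF0 0 0 1 0 (by ring) (by rw [hw02]; ring)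
          (by rw [hg2, hg3]; ring)).2)
    · by_cases ha1 : a1 = 0
      · -- a1 = 0, a0 ≠ 0, g ≠ 0 : sinks 2,3
        have ha0 : a0 ≠ 0 := fun h => ha ⟨h, ha1⟩
        have hB2 : w22*g3 - w23*g2 = 0 := by
          have := (KF2 (a1*(w22*g3 - w23*g2)) (-(a0*(w22*g3 - w23*g2)))
            (-(g3*(w20*a1 - w21*a0))) (g2*(w20*a1 - w21*a0))
            (by ring) (by ring) (by ring)).1
          have := neg_eq_zero.mp this
          rcases mul_eq_zero.mp this with h | h
          · exact absurd h ha0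
          · exact h
        have hg3' : g3 = 0 :=
          (KF2 0 0 g3 (-g2) (by ring) (by linear_combination hB2) (by ring)).2
        have hB3 : w32*g3 - w33*g2 = 0 := by
          have := (KF3 (a1*(w32*g3 - w33*g2)) (-(a0*(w32*g3 - w33*g2)))
            (-(g3*(w30*a1 - w31*a0))) (g2*(w30*a1 - w31*a0))
            (by ring) (by ring) (by ring)).1
          have := neg_eq_zero.mp this
          rcases mul_eq_zero.mp this with h | h
          · exact absurd h ha0
          · exact h
        have hg2' : g2 = 0 := neg_eq_zero.mp
          ((KF3 0 0 g3 (-g2) (by ring) (by linear_combination hB3) (by ring)).2)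
        exact hg ⟨hg2', hg3'⟩
      · -- a1 ≠ 0, g ≠ 0 : sinks 0,1
        have hB0 : w02*g3 - w03*g2 = 0 := by
          have := (KF0 (a1*(w02*g3 - w03*g2)) (-(a0*(w02*g3 - w03*g2)))
            (-(g3*(w00*a1 - w01*a0))) (g2*(w00*a1 - w01*a0))
            (by ring) (by ring) (by ring)).1
          rcases mul_eq_zero.mp this with h | h
          · exact absurd h ha1
          · exact h
        have hg3' : g3 = 0 :=
          (KF0 0 0 g3 (-g2) (by ring) (by linear_combination hB0) (by ring)).2
        have hB1 : w12*g3 - w13*g2 = 0 := by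
          have := (KF1 (a1*(w12*g3 - w13*g2)) (-(a0*(w12*g3 - w13*g2)))
            (-(g3*(w10*a1 - w11*a0))) (g2*(w10*a1 - w11*a0))
            (by ring) (by ring) (by ring)).1
          rcases mul_eq_zero.mp this with h | h
          · exact absurd h ha1
          · exact h
        have hg2' : g2 = 0 := neg_eq_zero.mp
          ((KF1 0 0 g3 (-g2) (by ring) (by linear_combination hB1) (by ring)).2)
        exact hg ⟨hg2', hg3'⟩

theorem no_scalar (F : Type) [Field F] :
    ¬ ∃ f : Fin 28 → (Fin 4 → Fin 1 → F) → Fin 1 → F, net.IsLinearNetworkCode F 1 f := by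
  rintro ⟨f, ⟨hN1, hN2, -⟩, hlin, hN3⟩
  set E : Fin 4 → (Fin 4 → Fin 1 → F) := fun i j _ => if j = i then 1 else 0 with hE
  -- expansion of each edge function in terms of its values on basis messages
  have hexp : ∀ (e : Fin 28) (X : Fin 4 → Fin 1 → F),
      f e X = fun _ => X 0 0 * f e (E 0) 0 + (X 1 0 * f e (E 1) 0 +
        (X 2 0 * f e (E 2) 0 + X 3 0 * f e (E 3) 0)) := by
    intro e X
    have hX : X = X 0 0 • E 0 + (X 1 0 • E 1 + (X 2 0 • E 2 + X 3 0 • E 3)) := by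
      funext j s
      have hs : s = 0 := Subsingleton.elim _ _
      subst hs
      fin_cases j <;> simp [hE]
    conv_lhs => rw [hX]
    rw [(hlin e).1, (hlin e).1, (hlin e).1, (hlin e).2, (hlin e).2, (hlin e).2, (hlin e).2]
    funext s
    have hs : s = 0 := Subsingleton.elim _ _
    subst hs
    simp [Pi.add_apply, Pi.smul_apply, smul_eq_mul]
  -- kernel trick
  have hker : ∀ e : Fin 28, 4 ≤ e.val → ∀ X : Fin 4 → Fin 1 → F,
      (∀ p ∈ net.P e, f p X = 0) → f e X = 0 := by
    intro e he X h
    obtain ⟨φ, hφl, hφ⟩ := hN3 e he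
    rw [hφ X, show (fun p : {p : Fin 28 // p ∈ net.P e} => f p.1 X) = 0 from
      funext fun p => h p.1 p.2]
    exact hφl.map_zero
  -- input edges reproduce messages
  have hin : ∀ (i0 : Fin 28) (h : i0.val < 4) (i : Fin 4), i0.val ≠ i.val → f i0 (E i) = 0 := by
    intro i0 h i hne
    rw [hN1 i0 h]
    funext s
    show (if (⟨i0.val, h⟩ : Fin 4) = i then (1:F) else 0) = 0
    exact if_neg fun hh => hne (show i0.val = i.val from congrArg (fun z : Fin 4 => z.val) hh)
  -- vanishing coefficients of the two side edges
  have hv4 : ∀ i : Fin 4, 2 ≤ i.val → f 4 (E i) 0 = 0 := by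
    intro i hi
    have h0 : f 4 (E i) = 0 := by
      apply hker 4 (by decide)
      intro p hp
      rw [show net.P 4 = {0, 1} from by decide] at hp
      simp only [Finset.mem_insert, Finset.mem_singleton] at hp
      rcases hp with rfl | rfl
      · exact hin 0 (by decide) i (by omega)
      · exact hin 1 (by decide) i (by omega)
    rw [h0]; rfl
  have hv7 : ∀ i : Fin 4, i.val < 2 → f 7 (E i) 0 = 0 := by
    intro i hi
    have h0 : f 7 (E i) = 0 := by
      apply hker 7 (by decide)
      intro p hp
      rw [show net.P 7 = {2, 3} from by decide] at hp
      simp only [Finset.mem_insert, Finset.mem_singleton] at hp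
      rcases hp with rfl | rfl
      · exact hin 2 (by decide) i (by omega)
      · exact hin 3 (by decide) i (by omega)
    rw [h0]; rfl
  -- sink argument
  have hsink : ∀ (e8 e12 e16 o : Fin 28), 4 ≤ e8.val → 4 ≤ e16.val → 20 ≤ o.val →
      net.P e8 = {4} → net.P e16 = {7} → net.P o = {e8, e12, e16} →
      ∀ X : Fin 4 → Fin 1 → F, f 4 X = 0 → f e12 X = 0 → f 7 X = 0 →
      X (net.δ o) = 0 := by
    intro e8 e12 e16 o h8 h16 ho hP8 hP16 hPo X hf4 hf12 hf7
    have hf8 : f e8 X = 0 := by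
      apply hker e8 h8
      intro p hp; rw [hP8] at hp
      obtain rfl := Finset.mem_singleton.mp hp
      exact hf4
    have hf16 : f e16 X = 0 := by
      apply hker e16 h16
      intro p hp; rw [hP16] at hp
      obtain rfl := Finset.mem_singleton.mp hp
      exact hf7
    have hfo : f o X = 0 := by
      apply hker o (by omega)
      intro p hp; rw [hPo] at hp
      simp only [Finset.mem_insert, Finset.mem_singleton] at hp
      rcases hp with rfl | rfl | rfl <;> assumption
    rw [← hN2 o (by omega) X]
    exact hfo
  -- the combined per-sink fact
  have KFgen : ∀ (e8 e12 e16 o1 o2 : Fin 28) (i1 i2 : Fin 4), 4 ≤ e8.val → 4 ≤ e16.val →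
      20 ≤ o1.val → 20 ≤ o2.val → net.P e8 = {4} → net.P e16 = {7} →
      net.P o1 = {e8, e12, e16} → net.P o2 = {e8, e12, e16} →
      net.δ o1 = i1 → net.δ o2 = i2 →
      ∀ x0 x1 x2 x3 : F,
        f 4 (E 0) 0 * x0 + f 4 (E 1) 0 * x1 = 0 →
        f e12 (E 0) 0 * x0 + f e12 (E 1) 0 * x1 + f e12 (E 2) 0 * x2 + f e12 (E 3) 0 * x3 = 0 →
        f 7 (E 2) 0 * x2 + f 7 (E 3) 0 * x3 = 0 →
        (![x0,x1,x2,x3] : Fin 4 → F) i1 = 0 ∧ (![x0,x1,x2,x3] : Fin 4 → F) i2 = 0 := by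
    intro e8 e12 e16 o1 o2 i1 i2 h8 h16 ho1 ho2 hP8 hP16 hPo1 hPo2 hδ1 hδ2 x0 x1 x2 x3 h1 h2 h3
    set X : Fin 4 → Fin 1 → F := fun i _ => ![x0,x1,x2,x3] i with hXdef
    have hf4 : f 4 X = 0 := by
      rw [hexp 4 X]
      funext s
      show x0 * f 4 (E 0) 0 + (x1 * f 4 (E 1) 0 + (x2 * f 4 (E 2) 0 + x3 * f 4 (E 3) 0)) = 0
      linear_combination h1 + x2 * hv4 2 (by decide) + x3 * hv4 3 (by decide)
    have hf7 : f 7 X = 0 := by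
      rw [hexp 7 X]
      funext s
      show x0 * f 7 (E 0) 0 + (x1 * f 7 (E 1) 0 + (x2 * f 7 (E 2) 0 + x3 * f 7 (E 3) 0)) = 0
      linear_combination h3 + x0 * hv7 0 (by decide) + x1 * hv7 1 (by decide)
    have hf12 : f e12 X = 0 := by
      rw [hexp e12 X]
      funext s
      show x0 * f e12 (E 0) 0 + (x1 * f e12 (E 1) 0 +
        (x2 * f e12 (E 2) 0 + x3 * f e12 (E 3) 0)) = 0
      linear_combination h2
    have c1 := hsink e8 e12 e16 o1 h8 h16 ho1 hP8 hP16 hPo1 X hf4 hf12 hf7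
    have c2 := hsink e8 e12 e16 o2 h8 h16 ho2 hP8 hP16 hPo2 X hf4 hf12 hf7
    rw [hδ1] at c1
    rw [hδ2] at c2
    exact ⟨congrFun c1 0, congrFun c2 0⟩
  have KF0 : ∀ x0 x1 x2 x3 : F,
      f 4 (E 0) 0 * x0 + f 4 (E 1) 0 * x1 = 0 →
      f 12 (E 0) 0 * x0 + f 12 (E 1) 0 * x1 + f 12 (E 2) 0 * x2 + f 12 (E 3) 0 * x3 = 0 →
      f 7 (E 2) 0 * x2 + f 7 (E 3) 0 * x3 = 0 → x0 = 0 ∧ x2 = 0 :=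
    fun x0 x1 x2 x3 h1 h2 h3 =>
      KFgen 8 12 16 20 21 0 2 (by decide) (by decide) (by decide) (by decide) (by decide)
        (by decide) (by decide) (by decide) (by decide) (by decide) x0 x1 x2 x3 h1 h2 h3
  have KF1 : ∀ x0 x1 x2 x3 : F,
      f 4 (E 0) 0 * x0 + f 4 (E 1) 0 * x1 = 0 →
      f 13 (E 0) 0 * x0 + f 13 (E 1) 0 * x1 + f 13 (E 2) 0 * x2 + f 13 (E 3) 0 * x3 = 0 →
      f 7 (E 2) 0 * x2 + f 7 (E 3) 0 * x3 = 0 → x0 = 0 ∧ x3 = 0 :=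
    fun x0 x1 x2 x3 h1 h2 h3 =>
      KFgen 9 13 17 22 23 0 3 (by decide) (by decide) (by decide) (by decide) (by decide)
        (by decide) (by decide) (by decide) (by decide) (by decide) x0 x1 x2 x3 h1 h2 h3
  have KF2 : ∀ x0 x1 x2 x3 : F,
      f 4 (E 0) 0 * x0 + f 4 (E 1) 0 * x1 = 0 →
      f 14 (E 0) 0 * x0 + f 14 (E 1) 0 * x1 + f 14 (E 2) 0 * x2 + f 14 (E 3) 0 * x3 = 0 →
      f 7 (E 2) 0 * x2 + f 7 (E 3) 0 * x3 = 0 → x1 = 0 ∧ x2 = 0 :=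
    fun x0 x1 x2 x3 h1 h2 h3 =>
      KFgen 10 14 18 24 25 1 2 (by decide) (by decide) (by decide) (by decide) (by decide)
        (by decide) (by decide) (by decide) (by decide) (by decide) x0 x1 x2 x3 h1 h2 h3
  have KF3 : ∀ x0 x1 x2 x3 : F,
      f 4 (E 0) 0 * x0 + f 4 (E 1) 0 * x1 = 0 →
      f 15 (E 0) 0 * x0 + f 15 (E 1) 0 * x1 + f 15 (E 2) 0 * x2 + f 15 (E 3) 0 * x3 = 0 →
      f 7 (E 2) 0 * x2 + f 7 (E 3) 0 * x3 = 0 → x1 = 0 ∧ x3 = 0 :=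
    fun x0 x1 x2 x3 h1 h2 h3 =>
      KFgen 11 15 19 26 27 1 3 (by decide) (by decide) (by decide) (by decide) (by decide)
        (by decide) (by decide) (by decide) (by decide) (by decide) x0 x1 x2 x3 h1 h2 h3
  exact endgame F (f 4 (E 0) 0) (f 4 (E 1) 0) (f 7 (E 2) 0) (f 7 (E 3) 0)
    (f 12 (E 0) 0) (f 12 (E 1) 0) (f 12 (E 2) 0) (f 12 (E 3) 0)
    (f 13 (E 0) 0) (f 13 (E 1) 0) (f 13 (E 2) 0) (f 13 (E 3) 0)
    (f 14 (E 0) 0) (f 14 (E 1) 0) (f 14 (E 2) 0) (f 14 (E 3) 0)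
    (f 15 (E 0) 0) (f 15 (E 1) 0) (f 15 (E 2) 0) (f 15 (E 3) 0)
    KF0 KF1 KF2 KF3


/-- there exists an instance `N` of the Network Coding problem (the
non-Pappus network) that has no scalar linear network code over any field, but has a
linear network code of block length `2` over the field `F_3`, i.e., a `(2, 3)` linear
network code. -/
theorem exists_network_no_scalar_linear_but_vector_linear :
    ∃ (m k d : ℕ) (N : NetworkInstance m k d),
      (∀ (F : Type) [Field F],
        ¬ ∃ f : Fin m → (Fin k → Fin 1 → F) → Fin 1 → F,
            N.IsLinearNetworkCode F 1 f) ∧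
      (∃ f : Fin m → (Fin k → Fin 2 → ZMod 3) → Fin 2 → ZMod 3,
          N.IsLinearNetworkCode (ZMod 3) 2 f) := by
  exact ⟨28, 4, 8, net, fun F _ => no_scalar F, ⟨code, code_linear⟩⟩
end

section
/- For every field F, there do not exist vectors a_1,…,a_9 ∈ F^3 such that for every 3-element subset {i,j,k} of {1,…,9}, the span of {a_i, a_j, a_k} has dimension 2 if {i,j,k} ∈ S0 and dimension 3 if {i,j,k} ∉ S0. In other words, the non-Pappus matroid is not linearly representable over any field. -/
/-- The collection `S0` of dependent 3-element subsets (3-point lines) of the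
non-Pappus matroid on the ground set `{1, …, 9}` (here indexed by `Fin 9`, so that
the paper's element `i` corresponds to `i - 1`):
`S0 = {{1,2,3},{1,5,7},{3,5,9},{2,4,7},{4,5,6},{2,6,9},{1,6,8},{3,4,8}}`. -/
def S0 : Finset (Finset (Fin 9)) :=
  {{0, 1, 2}, {0, 4, 6}, {2, 4, 8}, {1, 3, 6}, {3, 4, 5}, {1, 5, 8}, {0, 5, 7}, {2, 3, 7}}

/-!
The representation translates into determinants: a triple of `a` is dependent exactly when the
`3 × 3` determinant of its vectors vanishes. Since `a 0, a 1, a 3` form a basis, a change of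
coordinates makes them the standard basis; the eight lines of `S0` then become polynomial
equations in the remaining coordinates, and `det (a 6, a 7, a 8)` times the four minors that the
matroid forces to be nonzero is an explicit combination of them. This is Pappus's theorem, and
it makes `{6, 7, 8}` dependent although it is a basis of the matroid.
-/

section Pappus

open Matrix

variable {F : Type*} [Field F]

abbrev tripleDet (x y z : Fin 3 → F) : F := (Matrix.of ![x, y, z]).det

theorem tripleDet_ne_zero_iff_finrank_span_eq_three (x y z : Fin 3 → F) :
    tripleDet x y z ≠ 0 ↔
      Module.finrank F (Submodule.span F ({x, y, z} : Set (Fin 3 → F))) = 3 := by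
  have hrange : Set.range (of ![x, y, z]).row = {x, y, z} := by
    change Set.range ![x, y, z] = _
    simp only [range_cons, range_empty, Set.union_empty, Set.singleton_union]
  rw [← isUnit_iff_ne_zero, ← isUnit_iff_isUnit_det, ← linearIndependent_rows_iff_isUnit,
    linearIndependent_iff_card_eq_finrank_span, hrange]
  simp [Set.finrank, eq_comm]

theorem tripleDet_eq_zero_iff_of_finrank_span_eq_ite {x y z : Fin 3 → F} {P : Prop} [Decidable P]
    (h : Module.finrank F (Submodule.span F ({x, y, z} : Set (Fin 3 → F))) = if P then 2 else 3) :
    tripleDet x y z = 0 ↔ P := by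
  rw [← not_iff_not, ← ne_eq, tripleDet_ne_zero_iff_finrank_span_eq_three, h]
  split_ifs with hP <;> simp [hP]

theorem tripleDet_vecMul (x y z : Fin 3 → F) (M : Matrix (Fin 3) (Fin 3) F) :
    tripleDet (x ᵥ* M) (y ᵥ* M) (z ᵥ* M) = tripleDet x y z * M.det := by
  have : Matrix.of ![x ᵥ* M, y ᵥ* M, z ᵥ* M] = Matrix.of ![x, y, z] * M := by
    ext i : 1
    rw [mul_apply_eq_vecMul]
    fin_cases i <;> rfl
  rw [tripleDet, this, det_mul]

theorem pappus_tripleDet_of_standard_frame (c : Fin 9 → Fin 3 → F)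
    (h0 : c 0 = ![1, 0, 0]) (h1 : c 1 = ![0, 1, 0]) (h3 : c 3 = ![0, 0, 1])
    (h012 : tripleDet (c 0) (c 1) (c 2) = 0) (h046 : tripleDet (c 0) (c 4) (c 6) = 0)
    (h248 : tripleDet (c 2) (c 4) (c 8) = 0) (h136 : tripleDet (c 1) (c 3) (c 6) = 0)
    (h345 : tripleDet (c 3) (c 4) (c 5) = 0) (h158 : tripleDet (c 1) (c 5) (c 8) = 0)
    (h057 : tripleDet (c 0) (c 5) (c 7) = 0) (h237 : tripleDet (c 2) (c 3) (c 7) = 0)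
    (h123 : tripleDet (c 1) (c 2) (c 3) ≠ 0) (h014 : tripleDet (c 0) (c 1) (c 4) ≠ 0)
    (h035 : tripleDet (c 0) (c 3) (c 5) ≠ 0) (h015 : tripleDet (c 0) (c 1) (c 5) ≠ 0) :
    tripleDet (c 6) (c 7) (c 8) = 0 := by
  simp only [tripleDet, det_fin_three, of_apply, cons_val', cons_val_zero, cons_val_one,
    head_cons, empty_val', cons_val_fin_one, head_fin_const, cons_val_two, tail_cons, h0, h1, h3]
    at *
  norm_num at *
  refine (mul_eq_zero.mp ?_).resolve_left
    (by simp [h123, h014, h035, h015] : c 2 0 * c 4 2 * c 5 1 * c 5 2 ≠ 0)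
  linear_combination (c 2 0 * c 5 1 * c 5 2 * (c 7 0 * c 8 2 - c 7 2 * c 8 0)) * h046
    - (c 5 1 * c 5 2 * c 6 2 * c 7 0) * h248
    - (c 2 0 * c 5 2 * c 6 2 * c 7 1 * c 8 2) * h345
    + (c 2 0 * c 5 2 * c 6 2 * c 4 1 * c 7 1) * h158
    + (c 2 0 * c 5 2 * c 6 2 * c 4 1 * c 8 0) * h057
    - (c 5 1 * c 5 2 * c 6 2 * (c 4 0 * c 8 2 - c 4 2 * c 8 0)) * h237
    + (c 5 1 * c 5 2 * c 6 2 * c 7 0 * (c 4 0 * c 8 1 - c 4 1 * c 8 0)) * h012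
    + (c 2 0 * c 4 2 * c 5 1 * c 5 2 * (c 7 1 * c 8 2 - c 7 2 * c 8 1)) * h136

theorem pappus_tripleDet (p : Fin 9 → Fin 3 → F) (h013 : tripleDet (p 0) (p 1) (p 3) ≠ 0)
    (h012 : tripleDet (p 0) (p 1) (p 2) = 0) (h046 : tripleDet (p 0) (p 4) (p 6) = 0)
    (h248 : tripleDet (p 2) (p 4) (p 8) = 0) (h136 : tripleDet (p 1) (p 3) (p 6) = 0)
    (h345 : tripleDet (p 3) (p 4) (p 5) = 0) (h158 : tripleDet (p 1) (p 5) (p 8) = 0)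
    (h057 : tripleDet (p 0) (p 5) (p 7) = 0) (h237 : tripleDet (p 2) (p 3) (p 7) = 0)
    (h123 : tripleDet (p 1) (p 2) (p 3) ≠ 0) (h014 : tripleDet (p 0) (p 1) (p 4) ≠ 0)
    (h035 : tripleDet (p 0) (p 3) (p 5) ≠ 0) (h015 : tripleDet (p 0) (p 1) (p 5) ≠ 0) :
    tripleDet (p 6) (p 7) (p 8) = 0 := by
  set B : Matrix (Fin 3) (Fin 3) F := Matrix.of ![p 0, p 1, p 3]
  have hB : IsUnit B.det := isUnit_iff_ne_zero.mpr h013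
  have hBinv : B⁻¹.det ≠ 0 := (isUnit_nonsing_inv_det B hB).ne_zero
  have hframe (r : Fin 3) (v : Fin 3 → F) (hv : ∀ j, v j = if r = j then 1 else 0) :
      B r ᵥ* B⁻¹ = v := by
    rw [← mul_apply_eq_vecMul, mul_nonsing_inv B hB]
    ext j
    rw [hv, one_apply]
  set c : Fin 9 → Fin 3 → F := fun i ↦ p i ᵥ* B⁻¹
  have hc (i j k : Fin 9) :
      tripleDet (c i) (c j) (c k) = 0 ↔ tripleDet (p i) (p j) (p k) = 0 := by
    simp only [c, tripleDet_vecMul, mul_eq_zero, hBinv, or_false]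
  simp only [ne_eq, ← hc] at h012 h046 h248 h136 h345 h158 h057 h237 h123 h014 h035 h015 ⊢
  refine pappus_tripleDet_of_standard_frame c (hframe 0 _ ?_) (hframe 1 _ ?_) (hframe 2 _ ?_)
    h012 h046 h248 h136 h345 h158 h057 h237 h123 h014 h035 h015 <;>
    intro j <;> fin_cases j <;> rfl

end Pappus

/-- for every field `F` there are no vectors `a_1, …, a_9 ∈ F^3` such
that for every 3-element subset `{i, j, k}` of `{1, …, 9}` the span of
`{a_i, a_j, a_k}` has dimension `2` if `{i, j, k} ∈ S0` and dimension `3` otherwise;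
that is, the non-Pappus matroid is not linearly representable over any field. -/
theorem nonPappus_not_representable (F : Type) [Field F] :
    ¬ ∃ a : Fin 9 → (Fin 3 → F), ∀ i j k : Fin 9, i ≠ j → i ≠ k → j ≠ k →
      Module.finrank F (Submodule.span F ({a i, a j, a k} : Set (Fin 3 → F))) =
        (if ({i, j, k} : Finset (Fin 9)) ∈ S0 then 2 else 3) := by
  rintro ⟨a, ha⟩
  have hdet (i j k : Fin 9) (h : i ≠ j ∧ i ≠ k ∧ j ≠ k) :
      tripleDet (a i) (a j) (a k) = 0 ↔ ({i, j, k} : Finset (Fin 9)) ∈ S0 :=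
    tripleDet_eq_zero_iff_of_finrank_span_eq_ite (ha i j k h.1 h.2.1 h.2.2)
  have line (i j k : Fin 9) (h : (i ≠ j ∧ i ≠ k ∧ j ≠ k) ∧ {i, j, k} ∈ S0) :
      tripleDet (a i) (a j) (a k) = 0 :=
    (hdet i j k h.1).mpr h.2
  have basis (i j k : Fin 9) (h : (i ≠ j ∧ i ≠ k ∧ j ≠ k) ∧ {i, j, k} ∉ S0) :
      tripleDet (a i) (a j) (a k) ≠ 0 :=
    mt (hdet i j k h.1).mp h.2
  exact basis 6 7 8 (by decide) <| pappus_tripleDet a (basis 0 1 3 (by decide))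
    (line 0 1 2 (by decide)) (line 0 4 6 (by decide)) (line 2 4 8 (by decide))
    (line 1 3 6 (by decide)) (line 3 4 5 (by decide)) (line 1 5 8 (by decide))
    (line 0 5 7 (by decide)) (line 2 3 7 (by decide)) (basis 1 2 3 (by decide))
    (basis 0 1 4 (by decide)) (basis 0 3 5 (by decide)) (basis 0 1 5 (by decide))
end

section
/- There exists an instance I(X,R) of the Index Coding problem for which vector linear coding strictly outperforms scalar linear coding over F_2: the minimum length ℓ of a linear index code of block length 2 over F_2, divided by 2, is strictly smaller than the minimum length of a scalar linear index code (block length 1) over F_2; that is, λ*(2,2) < λ*(1,2). Moreover, the instance I can be taken so that it has a linear (2,2) index code of length 2·μ(I) while it has no scalar linear (1,2) index code of length μ(I). -/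
/-- The concrete instance: 4 messages, 8 clients. -/
def R4 : Finset (Fin 4 × Finset (Fin 4)) :=
  {(0, {1,2,3}), (1, {2,3}), (2, {0,1}), (2, {0,3}), (2, {1,3}),
   (3, {0,1}), (3, {0,2}), (3, {1,2})}

/-- For a linear map, being an index code is equivalent to a kernel condition. -/
lemma linear_index_code_iff {ι : Type} (R : Finset (ι × Finset ι)) (n ℓ : ℕ)
    (g : (ι → Fin n → ZMod 2) → Fin ℓ → ZMod 2) (hg : IsLinearMap (ZMod 2) g) :
    IsIndexCode R n ℓ g ↔
      ∀ r ∈ R, ∀ z : ι → Fin n → ZMod 2,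
        g z = 0 → (∀ j ∈ r.2, z j = 0) → z r.1 = 0 := by
  have hgL : ∀ X, g X = IsLinearMap.mk' g hg X := fun _ => rfl
  constructor
  · intro h r hr z hz hH
    have h0 := h r hr z 0 (by rw [hz, hgL, map_zero]) (fun j hj => by rw [hH j hj]; rfl)
    simpa using h0
  · intro h r hr X X' hXX' hH
    have hz : g (X - X') = 0 := by
      rw [hgL, map_sub, ← hgL, ← hgL, hXX', sub_self]
    have h0 := h r hr (X - X') hz
      (fun j hj => by rw [Pi.sub_apply, hH j hj, sub_self])
    rwa [Pi.sub_apply, sub_eq_zero] at h0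

/-- The vector linear code of block length 2 and length 4. -/
def g2 (X : Fin 4 → Fin 2 → ZMod 2) : Fin 4 → ZMod 2 :=
  ![X 0 0 + X 1 1 + X 2 0,
    X 0 0 + X 0 1 + X 1 0 + X 2 1,
    X 0 1 + X 1 1 + X 3 0,
    X 0 0 + X 1 0 + X 3 1]

lemma g2_linear : IsLinearMap (ZMod 2) g2 := by
  constructor
  · intro X Y; funext i
    fin_cases i <;> simp [g2] <;> ring
  · intro c X; funext i
    fin_cases i <;> simp [g2, smul_eq_mul] <;> ring

set_option maxRecDepth 4000 in
lemma g2_code : IsIndexCode R4 2 4 g2 := by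
  rw [linear_index_code_iff R4 2 4 g2 g2_linear]
  decide

set_option maxRecDepth 10000 in
lemma key_matrices : ∀ m : Fin 2 → Fin 4 → ZMod 2, ∃ r ∈ R4, ∃ v : Fin 4 → ZMod 2,
    (∀ i, m i 0 * v 0 + m i 1 * v 1 + m i 2 * v 2 + m i 3 * v 3 = 0) ∧
    (∀ j ∈ r.2, v j = 0) ∧ ¬ v r.1 = 0 := by decide

/-- No scalar linear code of length 2 exists for `R4`. -/
lemma no_scalar_s9 : ¬ ∃ g : (Fin 4 → Fin 1 → ZMod 2) → Fin 2 → ZMod 2,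
    IsLinearMap (ZMod 2) g ∧ IsIndexCode R4 1 2 g := by
  rintro ⟨g, hlin, hcode⟩
  have hK := (linear_index_code_iff R4 1 2 g hlin).mp hcode
  set M : Fin 2 → Fin 4 → ZMod 2 :=
    fun i j => g (fun j' _ => if j' = j then 1 else 0) i with hM
  have hrep : ∀ z : Fin 4 → Fin 1 → ZMod 2, ∀ i,
      g z i = M i 0 * z 0 0 + M i 1 * z 1 0 + M i 2 * z 2 0 + M i 3 * z 3 0 := by
    intro z i
    have hz : z = ∑ j : Fin 4, z j 0 •
        (fun j' (_ : Fin 1) => if j' = j then (1 : ZMod 2) else 0) := by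
      funext j' b
      rw [Fin.fin_one_eq_zero b]
      simp [Finset.sum_apply, Pi.smul_apply, smul_eq_mul, mul_ite]
    have hL : ∀ X, g X = IsLinearMap.mk' g hlin X := fun _ => rfl
    conv_lhs => rw [hz]
    rw [hL, map_sum]
    simp only [← hL, Finset.sum_apply, hlin.map_smul, Pi.smul_apply, smul_eq_mul]
    rw [Fin.sum_univ_four]
    simp only [hM]
    ring
  obtain ⟨r, hr, v, hker, hH, hi⟩ := key_matrices M
  set z : Fin 4 → Fin 1 → ZMod 2 := fun j _ => v j with hzdef
  have hgz : g z = 0 := by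
    funext i
    rw [hrep z i]
    exact hker i
  have hz0 : z r.1 = 0 := hK r hr z hgz (fun j hj => by
    funext b; exact hH j hj)
  exact hi (congr_fun hz0 0)

/-- Padding: a linear index code of length `ℓ` gives one of any length `ℓ' ≥ ℓ`. -/
lemma pad {ι : Type} (R : Finset (ι × Finset ι)) (n ℓ ℓ' : ℕ) (hle : ℓ ≤ ℓ')
    (h : ∃ g : (ι → Fin n → ZMod 2) → Fin ℓ → ZMod 2,
      IsLinearMap (ZMod 2) g ∧ IsIndexCode R n ℓ g) :
    ∃ g : (ι → Fin n → ZMod 2) → Fin ℓ' → ZMod 2,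
      IsLinearMap (ZMod 2) g ∧ IsIndexCode R n ℓ' g := by
  obtain ⟨g, hlin, hcode⟩ := h
  refine ⟨fun X i => if h : (i : ℕ) < ℓ then g X ⟨i, h⟩ else 0, ⟨?_, ?_⟩, ?_⟩
  · intro X Y; funext i
    by_cases h : (i : ℕ) < ℓ <;> simp [h, hlin.map_add]
  · intro c X; funext i
    by_cases h : (i : ℕ) < ℓ <;> simp [h, hlin.map_smul]
  · intro r hr X X' hXX' hH
    refine hcode r hr X X' ?_ hH
    funext i
    have h' := congr_fun hXX' ⟨(i : ℕ), lt_of_lt_of_le i.2 hle⟩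
    simpa [i.2] using h'

/-- The trivial scalar code of length 4. -/
lemma scalar4 : ∃ g : (Fin 4 → Fin 1 → ZMod 2) → Fin 4 → ZMod 2,
    IsLinearMap (ZMod 2) g ∧ IsIndexCode R4 1 4 g := by
  refine ⟨fun X i => X i 0, ⟨fun X Y => rfl, fun c X => rfl⟩, ?_⟩
  intro r hr X X' h hH
  funext b
  rw [Fin.fin_one_eq_zero b]
  exact congr_fun h r.1

/-- STATEMENT: there exists an instance `I(X, R)` of the Index Coding problem for
which vector linear coding strictly outperforms scalar linear coding over `F_2`:
`I` has a linear `(2, q)` index code of length `2 · μ(I)` but no scalar linear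
`(1, q)` index code of length `μ(I)`, and the minimum length `ℓ₂` of a linear index
code of block length `2` and the minimum length `ℓ₁` of a scalar linear index code
satisfy `ℓ₂ / 2 < ℓ₁`, i.e., `λ*(2, q) < λ*(1, q)`. -/
theorem index_coding_vector_beats_scalar_F2 :
    ∃ (k : ℕ) (R : Finset (Fin k × Finset (Fin k))),
      (∀ r ∈ R, r.1 ∉ r.2) ∧
      (∃ g : (Fin k → Fin 2 → ZMod 2) → Fin (2 * mu R) → ZMod 2,
        IsLinearMap (ZMod 2) g ∧ IsIndexCode R 2 (2 * mu R) g) ∧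
      (¬ ∃ g : (Fin k → Fin 1 → ZMod 2) → Fin (mu R) → ZMod 2,
        IsLinearMap (ZMod 2) g ∧ IsIndexCode R 1 (mu R) g) ∧
      (∃ ℓ₂ ℓ₁ : ℕ,
        IsLeast {ℓ : ℕ | ∃ g : (Fin k → Fin 2 → ZMod 2) → Fin ℓ → ZMod 2,
          IsLinearMap (ZMod 2) g ∧ IsIndexCode R 2 ℓ g} ℓ₂ ∧
        IsLeast {ℓ : ℕ | ∃ g : (Fin k → Fin 1 → ZMod 2) → Fin ℓ → ZMod 2,
          IsLinearMap (ZMod 2) g ∧ IsIndexCode R 1 ℓ g} ℓ₁ ∧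
        ℓ₂ < 2 * ℓ₁) := by
  have hmu : mu R4 = 2 := by decide
  have h24 : 2 * mu R4 = 4 := by rw [hmu]
  refine ⟨4, R4, by decide, ?_, ?_, ?_⟩
  · rw [h24]
    exact ⟨g2, g2_linear, g2_code⟩
  · rw [hmu]
    exact no_scalar_s9
  · have hne2 : {ℓ : ℕ | ∃ g : (Fin 4 → Fin 2 → ZMod 2) → Fin ℓ → ZMod 2,
        IsLinearMap (ZMod 2) g ∧ IsIndexCode R4 2 ℓ g}.Nonempty :=
      ⟨4, g2, g2_linear, g2_code⟩
    have hne1 : {ℓ : ℕ | ∃ g : (Fin 4 → Fin 1 → ZMod 2) → Fin ℓ → ZMod 2,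
        IsLinearMap (ZMod 2) g ∧ IsIndexCode R4 1 ℓ g}.Nonempty :=
      ⟨4, scalar4⟩
    refine ⟨_, _, ⟨Nat.sInf_mem hne2, fun b hb => Nat.sInf_le hb⟩,
      ⟨Nat.sInf_mem hne1, fun b hb => Nat.sInf_le hb⟩, ?_⟩
    have h2le : sInf {ℓ : ℕ | ∃ g : (Fin 4 → Fin 2 → ZMod 2) → Fin ℓ → ZMod 2,
        IsLinearMap (ZMod 2) g ∧ IsIndexCode R4 2 ℓ g} ≤ 4 :=
      Nat.sInf_le ⟨g2, g2_linear, g2_code⟩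
    have h1ge : 3 ≤ sInf {ℓ : ℕ | ∃ g : (Fin 4 → Fin 1 → ZMod 2) → Fin ℓ → ZMod 2,
        IsLinearMap (ZMod 2) g ∧ IsIndexCode R4 1 ℓ g} := by
      by_contra hcon
      push_neg at hcon
      exact no_scalar_s9 (pad R4 1 _ 2 (by omega) (Nat.sInf_mem hne1))
    omega
end

section
/- There exists an instance I(X,R) of the Index Coding problem for which vector linear coding strictly outperforms scalar linear coding over F_3: the minimum length ℓ of a linear index code of block length 2 over F_3, divided by 2, is strictly smaller than the minimum length of a scalar linear index code (block length 1) over F_3; that is, λ*(2,3) < λ*(1,3). Moreover, the instance I can be taken so that it has a linear (2,3) index code of length 2·μ(I) while it has no scalar linear (1,3) index code of length μ(I). -/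
set_option maxRecDepth 10000

namespace IdxAux

/-- The instance: 5 messages; for every ordered pair `i ≠ j` a client demanding `i`
with side information everything except `i` and `j`. -/
def R5 : Finset (Fin 5 × Finset (Fin 5)) :=
  (Finset.univ.filter fun p : Fin 5 × Fin 5 => p.1 ≠ p.2).image
    fun p => (p.1, Finset.univ \ {p.1, p.2})

lemma hmu : mu R5 = 2 := by decide

lemma hnotmem : ∀ r ∈ R5, r.1 ∉ r.2 := by decide

lemma memR : ∀ i j : Fin 5, i ≠ j → (i, Finset.univ \ ({i, j} : Finset (Fin 5))) ∈ R5 := by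
  intro i j h
  exact Finset.mem_image.2 ⟨(i, j), Finset.mem_filter.2 ⟨Finset.mem_univ _, h⟩, rfl⟩

/-- Coefficient matrix of a vector linear `(2,3)` code of length 4, coming from the
scalar `F₉` code with columns `(1,0), (1,1), (1,2), (1,α), (0,1)` (α² = -1). -/
def A : Fin 5 → Fin 2 → Fin 4 → ZMod 3 :=
  ![![![1,0,0,0], ![0,1,0,0]],
    ![![1,0,1,0], ![0,1,0,1]],
    ![![1,0,2,0], ![0,1,0,2]],
    ![![1,0,0,1], ![0,1,2,0]],
    ![![0,0,1,0], ![0,0,0,1]]]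

def gv (X : Fin 5 → Fin 2 → ZMod 3) (m : Fin 4) : ZMod 3 := ∑ i, ∑ t, X i t * A i t m

lemma kerv : ∀ i j : Fin 5, i ≠ j → ∀ zi zj : Fin 2 → ZMod 3,
    (∀ m : Fin 4, (∑ t, zi t * A i t m) + (∑ t, zj t * A j t m) = 0) → zi = 0 := by decide

lemma gv_linear : IsLinearMap (ZMod 3) gv := by
  constructor
  · intro X Y
    funext m
    simp [gv, add_mul, Finset.sum_add_distrib]
  · intro c X
    funext m
    simp [gv, Finset.mul_sum, mul_assoc, mul_add]

lemma gv_code : IsIndexCode R5 2 4 gv := by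
  intro r hr X X' hEq hSide
  obtain ⟨p, hp, rfl⟩ := Finset.mem_image.1 hr
  obtain ⟨-, hij⟩ := Finset.mem_filter.1 hp
  set i := p.1; set j := p.2
  have hz : ∀ k, k ≠ i → k ≠ j → X k = X' k := by
    intro k h1 h2
    exact hSide k (by simp [h1, h2])
  have hsum : ∀ m : Fin 4,
      (∑ t, (X i t - X' i t) * A i t m) + (∑ t, (X j t - X' j t) * A j t m) = 0 := by
    intro m
    have h0 : ∑ k, ∑ t, (X k t - X' k t) * A k t m = 0 := by
      have hgm := congrFun hEq m
      simp only [gv] at hgm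
      calc ∑ k, ∑ t, (X k t - X' k t) * A k t m
          = (∑ k, ∑ t, X k t * A k t m) - ∑ k, ∑ t, X' k t * A k t m := by
            simp [sub_mul, Finset.sum_sub_distrib]
        _ = 0 := by rw [hgm, sub_self]
    have hsub : ∑ k, ∑ t, (X k t - X' k t) * A k t m
        = ∑ k ∈ ({i, j} : Finset (Fin 5)), ∑ t, (X k t - X' k t) * A k t m := by
      refine (Finset.sum_subset (Finset.subset_univ _) ?_).symm
      intro k _ hk
      simp only [Finset.mem_insert, Finset.mem_singleton, not_or] at hk
      rw [hz k hk.1 hk.2]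
      simp
    rw [hsub, Finset.sum_pair hij] at h0
    exact h0
  have hzi := kerv i j hij (fun t => X i t - X' i t) (fun t => X j t - X' j t) hsum
  funext t
  have := congrFun hzi t
  simpa [sub_eq_zero] using this

/-! ### No scalar linear code of length 2 -/

def phi (c : Fin 2 → ZMod 3) : Option (ZMod 3) :=
  if c 0 = 0 then none else some (c 1 * c 0)

lemma dep_of_phi_eq : ∀ c d : Fin 2 → ZMod 3, c ≠ 0 → d ≠ 0 → phi c = phi d →
    ∃ a b : ZMod 3, a ≠ 0 ∧ ∀ m : Fin 2, a * c m + b * d m = 0 := by decide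

lemma next_ne : ∀ i : Fin 5, i ≠ i + 1 := by decide

lemma no_five (c : Fin 5 → Fin 2 → ZMod 3)
    (hind : ∀ i j : Fin 5, i ≠ j → ∀ a b : ZMod 3,
      (∀ m : Fin 2, a * c i m + b * c j m = 0) → a = 0) : False := by
  have hne : ∀ i, c i ≠ 0 := by
    intro i hc
    have := hind i (i + 1) (next_ne i) 1 0 (by intro m; simp [hc])
    simp at this
  have hinj : Function.Injective (fun i => phi (c i)) := by
    intro i j hij
    by_contra h
    obtain ⟨a, b, ha, hab⟩ := dep_of_phi_eq (c i) (c j) (hne i) (hne j) hij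
    exact ha (hind i j h a b hab)
  have := Fintype.card_le_of_injective _ hinj
  simp [Fintype.card_option] at this

/-- unit message vectors -/
def e (i : Fin 5) : Fin 5 → Fin 1 → ZMod 3 := fun k _ => if k = i then 1 else 0

lemma no_scalar_2 : ¬ ∃ g : (Fin 5 → Fin 1 → ZMod 3) → Fin 2 → ZMod 3,
    IsLinearMap (ZMod 3) g ∧ IsIndexCode R5 1 2 g := by
  rintro ⟨g, hlin, hcode⟩
  set c : Fin 5 → Fin 2 → ZMod 3 := fun i => g (e i) with hc
  apply no_five c
  intro i j hij a b hab
  set X : Fin 5 → Fin 1 → ZMod 3 := a • e i + b • e j with hX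
  have hgX : g X = g 0 := by
    have h1 : g X = a • c i + b • c j := by
      rw [hX, hlin.map_add, hlin.map_smul, hlin.map_smul]
    have h2 : g 0 = 0 := hlin.map_zero
    rw [h1, h2]
    funext m
    have := hab m
    simpa [smul_eq_mul] using this
  have hside : ∀ k ∈ (Finset.univ \ ({i, j} : Finset (Fin 5))), X k = (0 : Fin 5 → Fin 1 → ZMod 3) k := by
    intro k hk
    simp only [Finset.mem_sdiff, Finset.mem_insert, Finset.mem_singleton, not_or] at hk
    funext t
    simp [hX, e, hk.2.1, hk.2.2]
  have hXi := hcode (i, Finset.univ \ ({i, j} : Finset (Fin 5))) (memR i j hij) X 0 hgX hside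
  have := congrFun hXi 0
  simpa [hX, e, hij, Ne.symm hij] using this

/-- padding a short code to length 2 -/
lemma pad_to_2 {ℓ : ℕ} (hℓ : ℓ ≤ 2)
    (g : (Fin 5 → Fin 1 → ZMod 3) → Fin ℓ → ZMod 3)
    (hlin : IsLinearMap (ZMod 3) g) (hcode : IsIndexCode R5 1 ℓ g) :
    ∃ g2 : (Fin 5 → Fin 1 → ZMod 3) → Fin 2 → ZMod 3,
      IsLinearMap (ZMod 3) g2 ∧ IsIndexCode R5 1 2 g2 := by
  refine ⟨fun X m => if h : (m : ℕ) < ℓ then g X ⟨m, h⟩ else 0, ?_, ?_⟩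
  · constructor
    · intro X Y
      funext m
      by_cases h : (m : ℕ) < ℓ <;> simp [h, hlin.map_add]
    · intro a X
      funext m
      by_cases h : (m : ℕ) < ℓ <;> simp [h, hlin.map_smul]
  · intro r hr X X' hEq hSide
    refine hcode r hr X X' ?_ hSide
    funext m'
    have := congrFun hEq ⟨(m' : ℕ), lt_of_lt_of_le m'.isLt hℓ⟩
    simpa [m'.isLt] using this

/-- trivial scalar code of length 5 -/
lemma trivial_code : ∃ g : (Fin 5 → Fin 1 → ZMod 3) → Fin 5 → ZMod 3,
    IsLinearMap (ZMod 3) g ∧ IsIndexCode R5 1 5 g := by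
  refine ⟨fun X i => X i 0, ⟨fun X Y => rfl, fun a X => rfl⟩, ?_⟩
  intro r hr X X' hEq _
  funext t
  have h0 : t = 0 := Subsingleton.elim _ _
  rw [h0]
  exact congrFun hEq r.1

end IdxAux

/-- STATEMENT: there exists an instance `I(X, R)` of the Index Coding problem for
which vector linear coding strictly outperforms scalar linear coding over `F_3`:
`I` has a linear `(2, q)` index code of length `2 · μ(I)` but no scalar linear
`(1, q)` index code of length `μ(I)`, and the minimum length `ℓ₂` of a linear index
code of block length `2` and the minimum length `ℓ₁` of a scalar linear index code
satisfy `ℓ₂ / 2 < ℓ₁`, i.e., `λ*(2, q) < λ*(1, q)`. -/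
theorem index_coding_vector_beats_scalar_F3 :
    ∃ (k : ℕ) (R : Finset (Fin k × Finset (Fin k))),
      (∀ r ∈ R, r.1 ∉ r.2) ∧
      (∃ g : (Fin k → Fin 2 → ZMod 3) → Fin (2 * mu R) → ZMod 3,
        IsLinearMap (ZMod 3) g ∧ IsIndexCode R 2 (2 * mu R) g) ∧
      (¬ ∃ g : (Fin k → Fin 1 → ZMod 3) → Fin (mu R) → ZMod 3,
        IsLinearMap (ZMod 3) g ∧ IsIndexCode R 1 (mu R) g) ∧
      (∃ ℓ₂ ℓ₁ : ℕ,
        IsLeast {ℓ : ℕ | ∃ g : (Fin k → Fin 2 → ZMod 3) → Fin ℓ → ZMod 3,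
          IsLinearMap (ZMod 3) g ∧ IsIndexCode R 2 ℓ g} ℓ₂ ∧
        IsLeast {ℓ : ℕ | ∃ g : (Fin k → Fin 1 → ZMod 3) → Fin ℓ → ZMod 3,
          IsLinearMap (ZMod 3) g ∧ IsIndexCode R 1 ℓ g} ℓ₁ ∧
        ℓ₂ < 2 * ℓ₁) := by
  classical
  refine ⟨5, IdxAux.R5, IdxAux.hnotmem, ?_, ?_, ?_⟩
  · rw [IdxAux.hmu]
    exact ⟨IdxAux.gv, IdxAux.gv_linear, IdxAux.gv_code⟩
  · rw [IdxAux.hmu]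
    exact IdxAux.no_scalar_2
  · set S2 : Set ℕ := {ℓ : ℕ | ∃ g : (Fin 5 → Fin 2 → ZMod 3) → Fin ℓ → ZMod 3,
      IsLinearMap (ZMod 3) g ∧ IsIndexCode IdxAux.R5 2 ℓ g} with hS2
    set S1 : Set ℕ := {ℓ : ℕ | ∃ g : (Fin 5 → Fin 1 → ZMod 3) → Fin ℓ → ZMod 3,
      IsLinearMap (ZMod 3) g ∧ IsIndexCode IdxAux.R5 1 ℓ g} with hS1
    have h4 : (4 : ℕ) ∈ S2 := ⟨IdxAux.gv, IdxAux.gv_linear, IdxAux.gv_code⟩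
    have h5 : (5 : ℕ) ∈ S1 := IdxAux.trivial_code
    refine ⟨sInf S2, sInf S1, ⟨Nat.sInf_mem ⟨4, h4⟩, fun x hx => Nat.sInf_le hx⟩,
      ⟨Nat.sInf_mem ⟨5, h5⟩, fun x hx => Nat.sInf_le hx⟩, ?_⟩
    have hle : sInf S2 ≤ 4 := Nat.sInf_le h4
    have hge : 3 ≤ sInf S1 := by
      by_contra h
      push_neg at h
      have hmem : sInf S1 ∈ S1 := Nat.sInf_mem ⟨5, h5⟩
      obtain ⟨g, hlin, hcode⟩ := hmem
      exact IdxAux.no_scalar_2 (IdxAux.pad_to_2 (by omega) g hlin hcode)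
    omega
end
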